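/- Let H be a Hilbert space and let μ(n, T) = inf{‖T − R‖ : rank R ≤ n} denote the n-th singular value of a compact operator T. Let p > 0, let A be compact with lim_{n→∞} (n+1)^{1/p} μ(n, A) = c existing, and let B be compact with lim_{n→∞} (n+1)^{1/p} μ(n, B) = 0. Then lim_{n→∞} (n+1)^{1/p} μ(n, A + B) = c. -/

import Mathlib

open Filter

/-- The `n`-th singular value (approximation number)
`μ(n, T) = inf{‖T − R‖ : rank R ≤ n}` of an operator on a Hilbert space. -/
noncomputable def singVal {H : Type*} [NormedAddCommGroup H]
    [InnerProductSpace ℂ H] (T : H →L[ℂ] H) (n : ℕ) : ℝ :=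
  sInf {c : ℝ | ∃ R : H →L[ℂ] H,
    Module.rank ℂ (LinearMap.range (R : H →ₗ[ℂ] H)) ≤ (n : Cardinal) ∧
      c = ‖T - R‖}

section Aux

variable {H : Type*} [NormedAddCommGroup H] [InnerProductSpace ℂ H]

/-- The approximating set in the definition of `singVal`. -/
def svSet (T : H →L[ℂ] H) (n : ℕ) : Set ℝ :=
  {c : ℝ | ∃ R : H →L[ℂ] H,
    Module.rank ℂ (LinearMap.range (R : H →ₗ[ℂ] H)) ≤ (n : Cardinal) ∧
      c = ‖T - R‖}

lemma singVal_eq_sInf (T : H →L[ℂ] H) (n : ℕ) : singVal T n = sInf (svSet T n) := rfl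

lemma svSet_nonempty (T : H →L[ℂ] H) (n : ℕ) : (svSet T n).Nonempty := by
  refine ⟨‖T - 0‖, 0, ?_, rfl⟩
  simp [LinearMap.range_zero]

lemma svSet_bddBelow (T : H →L[ℂ] H) (n : ℕ) : BddBelow (svSet T n) := by
  refine ⟨0, fun c hc => ?_⟩
  obtain ⟨R, -, rfl⟩ := hc
  exact norm_nonneg _

lemma singVal_nonneg (T : H →L[ℂ] H) (n : ℕ) : 0 ≤ singVal T n := by
  rw [singVal_eq_sInf]
  refine le_csInf (svSet_nonempty T n) fun c hc => ?_
  obtain ⟨R, -, rfl⟩ := hc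
  exact norm_nonneg _

lemma singVal_le (T R : H →L[ℂ] H) (n : ℕ)
    (h : Module.rank ℂ (LinearMap.range (R : H →ₗ[ℂ] H)) ≤ (n : Cardinal)) :
    singVal T n ≤ ‖T - R‖ :=
  csInf_le (svSet_bddBelow T n) ⟨R, h, rfl⟩

lemma singVal_antitone (T : H →L[ℂ] H) {m n : ℕ} (h : m ≤ n) :
    singVal T n ≤ singVal T m := by
  rw [singVal_eq_sInf, singVal_eq_sInf]
  refine csInf_le_csInf (svSet_bddBelow T n) (svSet_nonempty T m) ?_
  rintro c ⟨R, hR, rfl⟩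
  exact ⟨R, hR.trans (by exact_mod_cast Nat.cast_le.2 h), rfl⟩

lemma singVal_add_le (S T : H →L[ℂ] H) (m n : ℕ) :
    singVal (S + T) (m + n) ≤ singVal S m + singVal T n := by
  refine le_of_forall_pos_le_add fun ε hε => ?_
  obtain ⟨c₁, hc₁, h1⟩ := Real.lt_sInf_add_pos (svSet_nonempty S m) (half_pos hε)
  obtain ⟨c₂, hc₂, h2⟩ := Real.lt_sInf_add_pos (svSet_nonempty T n) (half_pos hε)
  obtain ⟨R₁, hR₁, rfl⟩ := hc₁
  obtain ⟨R₂, hR₂, rfl⟩ := hc₂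
  have hsub : LinearMap.range ((R₁ + R₂ : H →L[ℂ] H) : H →ₗ[ℂ] H) ≤
      LinearMap.range (R₁ : H →ₗ[ℂ] H) ⊔ LinearMap.range (R₂ : H →ₗ[ℂ] H) := by
    rintro x ⟨y, rfl⟩
    exact Submodule.mem_sup.2 ⟨R₁ y, ⟨y, rfl⟩, R₂ y, ⟨y, rfl⟩, by simp⟩
  have hrank : Module.rank ℂ
      (LinearMap.range ((R₁ + R₂ : H →L[ℂ] H) : H →ₗ[ℂ] H)) ≤ ((m + n : ℕ) : Cardinal) := by
    calc Module.rank ℂ (LinearMap.range ((R₁ + R₂ : H →L[ℂ] H) : H →ₗ[ℂ] H))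
        ≤ Module.rank ℂ ↥(LinearMap.range (R₁ : H →ₗ[ℂ] H) ⊔
            LinearMap.range (R₂ : H →ₗ[ℂ] H)) := Submodule.rank_mono hsub
      _ ≤ Module.rank ℂ (LinearMap.range (R₁ : H →ₗ[ℂ] H)) +
            Module.rank ℂ (LinearMap.range (R₂ : H →ₗ[ℂ] H)) :=
          Submodule.rank_add_le_rank_add_rank _ _
      _ ≤ (m : Cardinal) + (n : Cardinal) := add_le_add hR₁ hR₂
      _ = ((m + n : ℕ) : Cardinal) := by push_cast; ring
  have key := singVal_le (S + T) (R₁ + R₂) (m + n) hrank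
  have hnorm : ‖(S + T) - (R₁ + R₂)‖ ≤ ‖S - R₁‖ + ‖T - R₂‖ := by
    have : (S + T) - (R₁ + R₂) = (S - R₁) + (T - R₂) := by abel
    rw [this]; exact norm_add_le _ _
  rw [← singVal_eq_sInf] at h1
  rw [← singVal_eq_sInf] at h2
  linarith

lemma singVal_neg_le (T : H →L[ℂ] H) (n : ℕ) : singVal (-T) n ≤ singVal T n := by
  refine le_of_forall_pos_le_add fun ε hε => ?_
  obtain ⟨cR, hcR, h1⟩ := Real.lt_sInf_add_pos (svSet_nonempty T n) hε
  obtain ⟨R, hR, rfl⟩ := hcR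
  have hrank : Module.rank ℂ (LinearMap.range ((-R : H →L[ℂ] H) : H →ₗ[ℂ] H)) ≤
      (n : Cardinal) := by
    have : ((-R : H →L[ℂ] H) : H →ₗ[ℂ] H) = -(R : H →ₗ[ℂ] H) := rfl
    rw [this, LinearMap.range_neg]
    exact hR
  have key := singVal_le (-T) (-R) n hrank
  have : ‖(-T) - (-R)‖ = ‖T - R‖ := by rw [neg_sub_neg, norm_sub_rev]
  rw [this] at key
  rw [← singVal_eq_sInf] at h1
  linarith

lemma singVal_neg (T : H →L[ℂ] H) (n : ℕ) : singVal (-T) n = singVal T n :=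
  le_antisymm (singVal_neg_le T n) (by simpa using singVal_neg_le (-T) n)

end Aux

lemma rpow_mul_bound {p : ℝ} (hp : 0 < p) {r x y μ : ℝ} (hr : 0 ≤ r) (hx : 0 ≤ x)
    (hy : 0 ≤ y) (hμ : 0 ≤ μ) (h : x ≤ r * y) :
    x ^ (1 / p) * μ ≤ r ^ (1 / p) * (y ^ (1 / p) * μ) := by
  rw [← mul_assoc, ← Real.mul_rpow hr hy]
  exact mul_le_mul_of_nonneg_right (Real.rpow_le_rpow hx h (by positivity)) hμ

lemma rpow_mul_bound' {p : ℝ} (hp : 0 < p) {r x y μ : ℝ} (hr : 0 ≤ r) (hx : 0 ≤ x)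
    (hy : 0 ≤ y) (hμ : 0 ≤ μ) (h : r * y ≤ x) :
    r ^ (1 / p) * (y ^ (1 / p) * μ) ≤ x ^ (1 / p) * μ := by
  rw [← mul_assoc, ← Real.mul_rpow hr hy]
  exact mul_le_mul_of_nonneg_right (Real.rpow_le_rpow (by positivity) h (by positivity)) hμ

set_option maxHeartbeats 1000000 in
/-- Stability of singular-value asymptotics under small perturbations: if `A`
is compact with `(n+1)^{1/p} μ(n,A) → c` and `B` is compact with
`(n+1)^{1/p} μ(n,B) → 0`, then `(n+1)^{1/p} μ(n, A+B) → c`. -/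
theorem singVal_asymptotics_perturbation {H : Type*} [NormedAddCommGroup H]
    [InnerProductSpace ℂ H] [CompleteSpace H]
    (p : ℝ) (hp : 0 < p) (A B : H →L[ℂ] H)
    (hAc : IsCompactOperator A) (hBc : IsCompactOperator B) (c : ℝ)
    (hA : Tendsto (fun n : ℕ => ((n : ℝ) + 1) ^ (1 / p) * singVal A n)
      atTop (nhds c))
    (hB : Tendsto (fun n : ℕ => ((n : ℝ) + 1) ^ (1 / p) * singVal B n)
      atTop (nhds 0)) :
    Tendsto (fun n : ℕ => ((n : ℝ) + 1) ^ (1 / p) * singVal (A + B) n)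
      atTop (nhds c) := by
  set α : ℕ → ℝ := fun n => ((n : ℝ) + 1) ^ (1 / p) * singVal A n with hα
  set β : ℕ → ℝ := fun n => ((n : ℝ) + 1) ^ (1 / p) * singVal B n with hβ
  have hc0 : 0 ≤ c :=
    ge_of_tendsto' hA fun n => mul_nonneg (by positivity) (singVal_nonneg A n)
  rw [Metric.tendsto_nhds]
  intro ε hε
  -- choose j
  have hq : Tendsto (fun j : ℕ => ((j : ℝ) / ((j : ℝ) - 1)) ^ (1 / p) * c)
      atTop (nhds c) := by
    have h0 : Tendsto (fun j : ℕ => ((j : ℝ) - 1)) atTop atTop :=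
      tendsto_atTop_add_const_right atTop (-1) (tendsto_natCast_atTop_atTop : Tendsto (fun j : ℕ => (j : ℝ)) atTop atTop)
    have h1 : Tendsto (fun j : ℕ => ((j : ℝ) - 1)⁻¹) atTop (nhds 0) :=
      h0.inv_tendsto_atTop
    have h2 : Tendsto (fun j : ℕ => 1 + ((j : ℝ) - 1)⁻¹) atTop (nhds 1) := by
      simpa using tendsto_const_nhds.add h1
    have h3 : Tendsto (fun j : ℕ => (j : ℝ) / ((j : ℝ) - 1)) atTop (nhds 1) := by
      apply h2.congr'
      filter_upwards [eventually_ge_atTop 2] with j hj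
      have : ((j : ℝ) - 1) ≠ 0 := by
        have : (2 : ℝ) ≤ (j : ℝ) := by exact_mod_cast hj
        nlinarith
      field_simp
      ring
    have h4 : Tendsto (fun j : ℕ => ((j : ℝ) / ((j : ℝ) - 1)) ^ (1 / p)) atTop
        (nhds 1) := by
      have := (Real.continuousAt_rpow_const 1 (1 / p)
        (Or.inl one_ne_zero)).tendsto.comp h3
      simpa [Function.comp_def] using this
    simpa using h4.mul_const c
  have hq' : Tendsto (fun j : ℕ => ((j : ℝ) / ((j : ℝ) + 1)) ^ (1 / p) * c)
      atTop (nhds c) := by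
    have h0 : Tendsto (fun j : ℕ => ((j : ℝ) + 1)⁻¹) atTop (nhds 0) :=
      (tendsto_atTop_add_const_right atTop 1 (tendsto_natCast_atTop_atTop : Tendsto (fun j : ℕ => (j : ℝ)) atTop atTop)).inv_tendsto_atTop
    have h3 : Tendsto (fun j : ℕ => (j : ℝ) / ((j : ℝ) + 1)) atTop (nhds 1) := by
      have h2 : Tendsto (fun j : ℕ => 1 - ((j : ℝ) + 1)⁻¹) atTop (nhds 1) := by
        simpa using tendsto_const_nhds.sub h0
      apply h2.congr'
      filter_upwards [eventually_ge_atTop 1] with j hj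
      have : ((j : ℝ) + 1) ≠ 0 := by positivity
      field_simp
      ring
    have h4 : Tendsto (fun j : ℕ => ((j : ℝ) / ((j : ℝ) + 1)) ^ (1 / p)) atTop
        (nhds 1) := by
      have := (Real.continuousAt_rpow_const 1 (1 / p)
        (Or.inl one_ne_zero)).tendsto.comp h3
      simpa [Function.comp_def] using this
    simpa using h4.mul_const c
  obtain ⟨j, hj2, hjup, hjlo⟩ :
      ∃ j : ℕ, 2 ≤ j ∧ ((j : ℝ) / ((j : ℝ) - 1)) ^ (1 / p) * c < c + ε / 2 ∧
        c - ε / 2 < ((j : ℝ) / ((j : ℝ) + 1)) ^ (1 / p) * c := by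
    have e1 := hq.eventually_lt_const (by linarith : c < c + ε / 2)
    have e2 := hq'.eventually_const_lt (by linarith : c - ε / 2 < c)
    obtain ⟨j, h1, h2, h3⟩ := ((eventually_ge_atTop 2).and (e1.and e2)).exists
    exact ⟨j, h1, h2, h3⟩
  have hj0 : 0 < j := by omega
  have hjR : (2 : ℝ) ≤ (j : ℝ) := by exact_mod_cast hj2
  -- nat facts
  have hkle : ∀ n : ℕ, n / j ≤ n := fun n => Nat.div_le_self n j
  have hjk : ∀ n : ℕ, j * (n / j) ≤ n := fun n => Nat.mul_div_le n j
  have hjk' : ∀ n : ℕ, n + 1 ≤ j * (n / j) + j := by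
    intro n
    have h1 := Nat.div_add_mod n j
    have h2 := Nat.mod_lt n hj0
    omega
  -- tendsto of index maps
  have hdiv : Tendsto (fun n : ℕ => n / j) atTop atTop := by
    refine tendsto_atTop_atTop.2 fun b => ⟨b * j, fun n hn => ?_⟩
    exact (Nat.le_div_iff_mul_le hj0).2 hn
  have hsub : Tendsto (fun n : ℕ => n - n / j) atTop atTop := by
    refine tendsto_atTop_atTop.2 fun b => ⟨2 * b, fun n hn => ?_⟩
    have h1 : n / j ≤ n / 2 := Nat.div_le_div_left hj2 (by norm_num)
    omega
  have haddk : Tendsto (fun n : ℕ => n + n / j) atTop atTop :=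
    tendsto_atTop_mono (fun n => Nat.le_add_right n (n / j)) tendsto_id
  -- limits of the auxiliary sequences
  have hαsub : Tendsto (fun n : ℕ => α (n - n / j)) atTop (nhds c) := hA.comp hsub
  have hαadd : Tendsto (fun n : ℕ => α (n + n / j)) atTop (nhds c) := hA.comp haddk
  have hβdiv : Tendsto (fun n : ℕ => β (n / j)) atTop (nhds 0) := hB.comp hdiv
  set g : ℕ → ℝ := fun n =>
    ((j : ℝ) / ((j : ℝ) - 1)) ^ (1 / p) * α (n - n / j) + (j : ℝ) ^ (1 / p) * β (n / j)
    with hgdef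
  set h : ℕ → ℝ := fun n =>
    ((j : ℝ) / ((j : ℝ) + 1)) ^ (1 / p) * α (n + n / j) - (j : ℝ) ^ (1 / p) * β (n / j)
    with hhdef
  have hg : Tendsto g atTop (nhds (((j : ℝ) / ((j : ℝ) - 1)) ^ (1 / p) * c)) := by
    have := (hαsub.const_mul (((j : ℝ) / ((j : ℝ) - 1)) ^ (1 / p))).add
      (hβdiv.const_mul ((j : ℝ) ^ (1 / p)))
    simpa only [mul_zero, add_zero] using this
  have hh : Tendsto h atTop (nhds (((j : ℝ) / ((j : ℝ) + 1)) ^ (1 / p) * c)) := by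
    have := (hαadd.const_mul (((j : ℝ) / ((j : ℝ) + 1)) ^ (1 / p))).sub
      (hβdiv.const_mul ((j : ℝ) ^ (1 / p)))
    simpa only [mul_zero, sub_zero] using this
  -- pointwise bounds
  have hub : ∀ n : ℕ, ((n : ℝ) + 1) ^ (1 / p) * singVal (A + B) n ≤ g n := by
    intro n
    set k := n / j with hk
    have hcast : ((n - k : ℕ) : ℝ) = (n : ℝ) - (k : ℝ) := by
      rw [Nat.cast_sub (hkle n)]
    have hsubadd : singVal (A + B) n ≤ singVal A (n - k) + singVal B k := by
      have := singVal_add_le A B (n - k) k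
      rwa [Nat.sub_add_cancel (hkle n)] at this
    have step1 : ((n : ℝ) + 1) ^ (1 / p) * singVal (A + B) n ≤
        ((n : ℝ) + 1) ^ (1 / p) * singVal A (n - k) +
        ((n : ℝ) + 1) ^ (1 / p) * singVal B k := by
      rw [← mul_add]
      exact mul_le_mul_of_nonneg_left hsubadd (by positivity)
    have hjkR : (j : ℝ) * (k : ℝ) ≤ (n : ℝ) := by exact_mod_cast hjk n
    have hjkR' : (n : ℝ) + 1 ≤ (j : ℝ) * (k : ℝ) + (j : ℝ) := by exact_mod_cast hjk' n
    have termA : ((n : ℝ) + 1) ^ (1 / p) * singVal A (n - k) ≤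
        ((j : ℝ) / ((j : ℝ) - 1)) ^ (1 / p) * α (n - k) := by
      refine rpow_mul_bound hp (div_nonneg (by positivity) (by linarith)) (by positivity) (by positivity)
        (singVal_nonneg A _) ?_
      rw [hcast, div_mul_eq_mul_div, le_div_iff₀ (by linarith : (0:ℝ) < (j:ℝ) - 1)]
      nlinarith
    have termB : ((n : ℝ) + 1) ^ (1 / p) * singVal B k ≤
        (j : ℝ) ^ (1 / p) * β k := by
      refine rpow_mul_bound hp (by positivity) (by positivity) (by positivity)
        (singVal_nonneg B _) ?_
      nlinarith
    calc ((n : ℝ) + 1) ^ (1 / p) * singVal (A + B) n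
        ≤ ((n : ℝ) + 1) ^ (1 / p) * singVal A (n - k) +
          ((n : ℝ) + 1) ^ (1 / p) * singVal B k := step1
      _ ≤ g n := add_le_add termA termB
  have hlb : ∀ n : ℕ, h n ≤ ((n : ℝ) + 1) ^ (1 / p) * singVal (A + B) n := by
    intro n
    set k := n / j with hk
    have hsubadd : singVal A (n + k) - singVal B k ≤ singVal (A + B) n := by
      have := singVal_add_le (A + B) (-B) n k
      rw [show (A + B) + -B = A by abel, singVal_neg] at this
      linarith
    have hjkR : (j : ℝ) * (k : ℝ) ≤ (n : ℝ) := by exact_mod_cast hjk n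
    have hjkR' : (n : ℝ) + 1 ≤ (j : ℝ) * (k : ℝ) + (j : ℝ) := by exact_mod_cast hjk' n
    have termA : ((j : ℝ) / ((j : ℝ) + 1)) ^ (1 / p) * α (n + k) ≤
        ((n : ℝ) + 1) ^ (1 / p) * singVal A (n + k) := by
      refine rpow_mul_bound' hp (by positivity) (by positivity) (by positivity)
        (singVal_nonneg A _) ?_
      push_cast
      rw [div_mul_eq_mul_div, div_le_iff₀ (by positivity : (0:ℝ) < (j:ℝ) + 1)]
      nlinarith
    have termB : ((n : ℝ) + 1) ^ (1 / p) * singVal B k ≤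
        (j : ℝ) ^ (1 / p) * β k := by
      refine rpow_mul_bound hp (by positivity) (by positivity) (by positivity)
        (singVal_nonneg B _) ?_
      nlinarith
    have step1 : ((n : ℝ) + 1) ^ (1 / p) * singVal A (n + k) -
        ((n : ℝ) + 1) ^ (1 / p) * singVal B k ≤
        ((n : ℝ) + 1) ^ (1 / p) * singVal (A + B) n := by
      rw [← mul_sub]
      exact mul_le_mul_of_nonneg_left hsubadd (by positivity)
    have : h n ≤ ((n : ℝ) + 1) ^ (1 / p) * singVal A (n + k) -
        ((n : ℝ) + 1) ^ (1 / p) * singVal B k := by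
      simp only [hhdef]
      exact sub_le_sub termA termB
    linarith
  -- conclude
  have ev1 : ∀ᶠ n in atTop, g n < c + ε := by
    have hlim : ((j : ℝ) / ((j : ℝ) - 1)) ^ (1 / p) * c < c + ε := by linarith
    exact hg.eventually_lt_const hlim
  have ev2 : ∀ᶠ n in atTop, c - ε < h n := by
    have hlim : c - ε < ((j : ℝ) / ((j : ℝ) + 1)) ^ (1 / p) * c := by linarith
    exact hh.eventually_const_lt hlim
  filter_upwards [ev1, ev2] with n h1 h2
  have hu' : ((n : ℝ) + 1) ^ (1 / p) * singVal (A + B) n < c + ε := lt_of_le_of_lt (hub n) h1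
  have hl' : c - ε < ((n : ℝ) + 1) ^ (1 / p) * singVal (A + B) n := lt_of_lt_of_le h2 (hlb n)
  simp only [Real.dist_eq, abs_lt]
  constructor <;> linarith
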